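/- arXiv:2108.06572 — 2 statements merged into one kernel-verified Lean document; each statement's English description precedes it below -/
import Mathlib

section
/- Let $c \in [0, 1)$, $b > 0$, and suppose $z^* = -(1-c)\left[1 + \frac{1}{W(-(1-c) e^{-1-b})}\right]$, where $W$ is the branch of the Lambert W function taking values in $[-1, 0)$ at the argument $-(1-c)e^{-1-b} \in (-1/e, 0)$. Then $z^*$ satisfies $\log(1 - c + z^*) - \frac{z^*}{1 - c + z^*} = b$. -/
/-- The closed-form Lambert-W expression `z* = -(1-c)(1 + 1/W)` solves the
transcendental equation `log(1 - c + z*) - z*/(1 - c + z*) = b`, where `W` is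
the value of the Lambert W function in `[-1, 0)` at `-(1-c)e^{-1-b}`. -/
theorem lambertW_solves_transcendental (c b w : ℝ) (hc0 : 0 ≤ c) (hc1 : c < 1)
    (hb : 0 < b)
    (hw : w * Real.exp w = -(1 - c) * Real.exp (-1 - b))
    (hw_mem : w ∈ Set.Ico (-1 : ℝ) 0) :
    let z := -(1 - c) * (1 + 1 / w)
    Real.log (1 - c + z) - z / (1 - c + z) = b := by
  intro z
  have hw0 : w < 0 := hw_mem.2
  have ha : (0:ℝ) < 1 - c := by linarith
  have hwne : w ≠ 0 := ne_of_lt hw0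
  have hnw : (0:ℝ) < -w := by linarith
  have hz : 1 - c + z = (1 - c) / (-w) := by
    show 1 - c + (-(1 - c) * (1 + 1 / w)) = (1 - c) / (-w)
    field_simp
    ring
  have key : Real.log (-w) + w = Real.log (1 - c) + (-1 - b) := by
    have h : (-w) * Real.exp w = (1 - c) * Real.exp (-1 - b) := by linarith
    have h2 := congrArg Real.log h
    rwa [Real.log_mul (ne_of_gt hnw) (Real.exp_ne_zero _),
      Real.log_mul (ne_of_gt ha) (Real.exp_ne_zero _),
      Real.log_exp, Real.log_exp] at h2
  have hfrac : z / (1 - c + z) = w + 1 := by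
    rw [hz]
    show (-(1 - c) * (1 + 1 / w)) / ((1 - c) / (-w)) = w + 1
    field_simp
  rw [hfrac, hz, Real.log_div (ne_of_gt ha) (ne_of_gt hnw)]
  linarith [key]
end

section
/- Let $c \in [0,1)$ and define $\phi(b) = -(1-c)\left[1 + \frac{1}{W_0(-(1-c)e^{-1-b})}\right]$ for $b > 0$, where $W_0$ is the principal branch of the Lambert W function. Then $\phi(b) > 0$ for all $b > 0$, and $\phi$ is strictly increasing in $b$. -/
private lemma wexp_strictMono : StrictMonoOn (fun w : ℝ => w * Real.exp w) (Set.Icc (-1) 0) := by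
  apply strictMonoOn_of_deriv_pos (convex_Icc _ _)
    (Continuous.continuousOn (by fun_prop))
  intro x hx
  rw [interior_Icc] at hx
  have hd : HasDerivAt (fun w : ℝ => w * Real.exp w) (1 * Real.exp x + x * Real.exp x) x :=
    (hasDerivAt_id x).mul (Real.hasDerivAt_exp x)
  rw [hd.deriv]
  have hex := Real.exp_pos x
  nlinarith [hx.1, hx.2]

/-- The closed-form auxiliary variable `φ(b) = -(1-c)[1 + 1/W₀(-(1-c)e^{-1-b})]`
is positive and strictly increasing for `b > 0`.  `W₀` is the principal branch
of the Lambert W function, characterized on `(-1/e, 0)` by `W₀(y)e^{W₀(y)} = y`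
and `W₀(y) ∈ (-1, 0)`. -/
theorem phi_pos_strictMono (c : ℝ) (hc0 : 0 ≤ c) (hc1 : c < 1) (W : ℝ → ℝ)
    (hW : ∀ y ∈ Set.Ioo (-(1 / Real.exp 1)) (0 : ℝ),
      W y * Real.exp (W y) = y ∧ W y ∈ Set.Ioo (-1 : ℝ) 0) :
    let φ : ℝ → ℝ := fun b =>
      -(1 - c) * (1 + 1 / W (-(1 - c) * Real.exp (-1 - b)))
    (∀ b : ℝ, 0 < b → 0 < φ b) ∧ StrictMonoOn φ (Set.Ioi 0) := by
  intro φ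
  have h1c : 0 < 1 - c := by linarith
  have hmem : ∀ b : ℝ, 0 < b →
      (-(1 - c) * Real.exp (-1 - b)) ∈ Set.Ioo (-(1 / Real.exp 1)) (0 : ℝ) := by
    intro b hb
    constructor
    · have h1 : Real.exp (-1 - b) < Real.exp (-1) := Real.exp_lt_exp.mpr (by linarith)
      have h2 : Real.exp (-1) = 1 / Real.exp 1 := by
        rw [Real.exp_neg, one_div]
      have h3 : (1 - c) * Real.exp (-1 - b) ≤ 1 * Real.exp (-1 - b) := by
        apply mul_le_mul_of_nonneg_right (by linarith) (Real.exp_pos _).le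
      nlinarith
    · have := Real.exp_pos (-1 - b)
      nlinarith
  -- basic facts about w = W(y b)
  have hwfacts : ∀ b : ℝ, 0 < b →
      let w := W (-(1 - c) * Real.exp (-1 - b))
      w * Real.exp w = -(1 - c) * Real.exp (-1 - b) ∧ -1 < w ∧ w < 0 := by
    intro b hb
    obtain ⟨h1, h2, h3⟩ := hW _ (hmem b hb)
    exact ⟨h1, h2, h3⟩
  have hpos : ∀ b : ℝ, 0 < b → 0 < φ b := by
    intro b hb
    obtain ⟨_, hw1, hw2⟩ := hwfacts b hb
    set w := W (-(1 - c) * Real.exp (-1 - b)) with hwdef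
    have hwne : w ≠ 0 := ne_of_lt hw2
    have hinv : w * (1 / w) = 1 := by field_simp
    have hu : 1 / w < -1 := by
      rw [div_lt_iff_of_neg hw2]
      linarith
    show 0 < -(1 - c) * (1 + 1 / w)
    nlinarith
  refine ⟨hpos, ?_⟩
  intro b1 hb1 b2 hb2 h12
  simp only [Set.mem_Ioi] at hb1 hb2
  obtain ⟨he1, hw11, hw12⟩ := hwfacts b1 hb1
  obtain ⟨he2, hw21, hw22⟩ := hwfacts b2 hb2
  set w1 := W (-(1 - c) * Real.exp (-1 - b1)) with hw1def
  set w2 := W (-(1 - c) * Real.exp (-1 - b2)) with hw2def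
  have hy : -(1 - c) * Real.exp (-1 - b1) < -(1 - c) * Real.exp (-1 - b2) := by
    have : Real.exp (-1 - b2) < Real.exp (-1 - b1) := Real.exp_lt_exp.mpr (by linarith)
    nlinarith
  have hglt : w1 * Real.exp w1 < w2 * Real.exp w2 := by rw [he1, he2]; exact hy
  have hwlt : w1 < w2 := by
    have := (wexp_strictMono.lt_iff_lt
      (⟨hw11.le, hw12.le⟩ : w1 ∈ Set.Icc (-1 : ℝ) 0)
      (⟨hw21.le, hw22.le⟩ : w2 ∈ Set.Icc (-1 : ℝ) 0)).mp hglt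
    exact this
  have hw1ne : w1 ≠ 0 := ne_of_lt hw12
  have hw2ne : w2 ≠ 0 := ne_of_lt hw22
  have hinv1 : w1 * (1 / w1) = 1 := by field_simp
  have hinv2 : w2 * (1 / w2) = 1 := by field_simp
  have hprod : 0 < w1 * w2 := mul_pos_of_neg_of_neg hw12 hw22
  have hult : 1 / w2 < 1 / w1 := by
    nlinarith [hinv1, hinv2, hprod, hwlt]
  show -(1 - c) * (1 + 1 / w1) < -(1 - c) * (1 + 1 / w2)
  nlinarith
end
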